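/- arXiv:1509.08360 — 2 statements merged into one kernel-verified Lean document; each statement's English description precedes it below -/
import Mathlib

section
/- Let S be an n×n real symmetric matrix, f : ℝ → ℝ, p a polynomial with δ = max_l |f(λ_l) - p(λ_l)|, and Ω an n×d matrix satisfying the (1±ε) Johnson–Lindenstrauss distance-preservation property for the rows of p(S) (i.e., ‖Ωᵀ x‖² ∈ [(1-ε)‖x‖², (1+ε)‖x‖²] for x in the set of pairwise row differences of p(S)). Then for any standard basis vectors i_p, i_q: √(1-ε)·(‖f(S)(i_p - i_q)‖ - δ√2) ≤ ‖Ωᵀ p(S)(i_p - i_q)‖ ≤ √(1+ε)·(‖f(S)(i_p - i_q)‖ + δ√2). -/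
open Matrix

lemma my_sum_mulVec {n : ℕ} (A : Fin n → Matrix (Fin n) (Fin n) ℝ) (y : Fin n → ℝ) :
    (∑ l, A l).mulVec y = ∑ l, (A l).mulVec y := by
  funext i
  simp only [Matrix.mulVec, dotProduct, Finset.sum_apply, Matrix.sum_apply, Finset.sum_mul]
  rw [Finset.sum_comm]

lemma my_vecMulVec_mulVec {n : ℕ} (w u y : Fin n → ℝ) :
    (Matrix.vecMulVec w u).mulVec y = (u ⬝ᵥ y) • w := by
  funext i
  simp only [Matrix.mulVec, Matrix.vecMulVec_apply, dotProduct, Pi.smul_apply, smul_eq_mul,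
    Finset.sum_mul]
  exact Finset.sum_congr rfl fun _ _ => by ring

lemma my_norm_eq {n : ℕ} (u : Fin n → ℝ) :
    Real.sqrt (∑ i, u i ^ 2) = ‖(WithLp.equiv 2 (Fin n → ℝ)).symm u‖ := by
  rw [EuclideanSpace.norm_eq]
  simp [sq_abs]

section main
variable {n : ℕ} (lam : Fin n → ℝ) (v : Fin n → Fin n → ℝ)

lemma my_complete (horth : ∀ k l, v k ⬝ᵥ v l = if k = l then (1 : ℝ) else 0)
    (y : Fin n → ℝ) : ∑ l, (v l ⬝ᵥ y) • v l = y := by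
  have h1 : (Matrix.of v) * (Matrix.of v)ᵀ = 1 := by
    ext k l
    simpa [Matrix.mul_apply, Matrix.one_apply, dotProduct] using horth k l
  have h2 : (Matrix.of v)ᵀ * (Matrix.of v) = 1 := mul_eq_one_comm.mp h1
  have hVtV : ∀ i j : Fin n, (∑ l, v l i * v l j) = if i = j then 1 else 0 := by
    intro i j
    have := congrFun (congrFun h2 i) j
    simpa [Matrix.mul_apply, Matrix.one_apply] using this
  funext i
  simp only [Finset.sum_apply, Pi.smul_apply, smul_eq_mul, dotProduct, Finset.sum_mul]
  rw [Finset.sum_comm]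
  calc ∑ j, ∑ l, v l j * y j * v l i
      = ∑ j, (∑ l, v l i * v l j) * y j := by
        refine Finset.sum_congr rfl fun j _ => ?_
        rw [Finset.sum_mul]
        exact Finset.sum_congr rfl fun l _ => by ring
    _ = y i := by simp [hVtV, Finset.sum_ite_eq']

lemma my_norm2 (horth : ∀ k l, v k ⬝ᵥ v l = if k = l then (1 : ℝ) else 0)
    (c : Fin n → ℝ) : ∑ i, ((∑ l, c l • v l) i) ^ 2 = ∑ l, c l ^ 2 := by
  simp only [Finset.sum_apply, Pi.smul_apply, smul_eq_mul, sq, Finset.sum_mul_sum]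
  rw [Finset.sum_comm]
  calc ∑ l, ∑ i, ∑ m, c l * v l i * (c m * v m i)
      = ∑ l, ∑ m, (c l * c m) * (v l ⬝ᵥ v m) := by
        refine Finset.sum_congr rfl fun l _ => ?_
        rw [Finset.sum_comm]
        refine Finset.sum_congr rfl fun m _ => ?_
        simp only [dotProduct, Finset.mul_sum]
        exact Finset.sum_congr rfl fun i _ => by ring
    _ = ∑ l, c l * c l := by
        simp only [horth, mul_ite, mul_one, mul_zero, Finset.sum_ite_eq, Finset.mem_univ,
          if_true]

lemma my_eigen (S : Matrix (Fin n) (Fin n) ℝ)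
    (horth : ∀ k l, v k ⬝ᵥ v l = if k = l then (1 : ℝ) else 0)
    (hS : S = ∑ l, lam l • Matrix.vecMulVec (v l) (v l)) (m : Fin n) :
    S.mulVec (v m) = lam m • v m := by
  rw [hS, my_sum_mulVec]
  have : ∀ l, (lam l • Matrix.vecMulVec (v l) (v l)).mulVec (v m)
      = (if l = m then lam l else 0) • v l := by
    intro l
    rw [Matrix.smul_mulVec, my_vecMulVec_mulVec, horth]
    by_cases h : l = m <;> simp [h, smul_smul]
  simp only [this, ite_smul, zero_smul, Finset.sum_ite_eq', Finset.mem_univ, if_true]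

lemma my_aeval_eigen (S : Matrix (Fin n) (Fin n) ℝ)
    (horth : ∀ k l, v k ⬝ᵥ v l = if k = l then (1 : ℝ) else 0)
    (hS : S = ∑ l, lam l • Matrix.vecMulVec (v l) (v l)) (P : Polynomial ℝ) (m : Fin n) :
    (Polynomial.aeval S P).mulVec (v m) = P.eval (lam m) • v m := by
  induction P using Polynomial.induction_on with
  | C a =>
      simp [Polynomial.aeval_C, Algebra.algebraMap_eq_smul_one, Matrix.smul_mulVec]
  | add P Q hP hQ =>
      simp [map_add, Matrix.add_mulVec, hP, hQ, add_smul]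
  | monomial k a hk =>
      have : Polynomial.aeval S (Polynomial.C a * Polynomial.X ^ (k + 1))
          = Polynomial.aeval S (Polynomial.C a * Polynomial.X ^ k) * S := by
        rw [_root_.map_mul, _root_.map_mul, map_pow, map_pow, pow_succ, mul_assoc]
        simp [Polynomial.aeval_X]
      rw [this, ← Matrix.mulVec_mulVec, my_eigen lam v S horth hS, Matrix.mulVec_smul, hk]
      simp [smul_smul, pow_succ]
      ring_nf
end main


open scoped Matrix



open scoped Matrix

/-- If `δ = max_l |f(λ_l) - p(λ_l)|` and `Ω` satisfies the `(1±ε)` JL distance-preservation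
property for the pairwise row differences of `p(S)`, then
`√(1-ε)(‖f(S)(i_p-i_q)‖ - δ√2) ≤ ‖Ωᵀ p(S)(i_p-i_q)‖ ≤ √(1+ε)(‖f(S)(i_p-i_q)‖ + δ√2)`. -/
theorem compressive_embedding_dist_bounds {n d : ℕ} [NeZero n]
    (S : Matrix (Fin n) (Fin n) ℝ) (lam : Fin n → ℝ) (v : Fin n → Fin n → ℝ)
    (horth : ∀ k l, v k ⬝ᵥ v l = if k = l then (1 : ℝ) else 0)
    (hS : S = ∑ l, lam l • Matrix.vecMulVec (v l) (v l))
    (f : ℝ → ℝ) (P : Polynomial ℝ)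
    (fS : Matrix (Fin n) (Fin n) ℝ)
    (hfS : fS = ∑ l, f (lam l) • Matrix.vecMulVec (v l) (v l))
    (pS : Matrix (Fin n) (Fin n) ℝ) (hpS : pS = Polynomial.aeval S P)
    (δ : ℝ)
    (hδ : δ = Finset.univ.sup' Finset.univ_nonempty
        (fun l => |f (lam l) - P.eval (lam l)|))
    (ε : ℝ) (hε : ε ∈ Set.Ioo (0 : ℝ) 1)
    (Ω : Matrix (Fin n) (Fin d) ℝ)
    (hJL : ∀ p q : Fin n,
      (1 - ε) * (∑ i, (pS.mulVec (Pi.single p 1 - Pi.single q 1) i) ^ 2) ≤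
          (∑ j, (Ωᵀ.mulVec (pS.mulVec (Pi.single p 1 - Pi.single q 1)) j) ^ 2) ∧
        (∑ j, (Ωᵀ.mulVec (pS.mulVec (Pi.single p 1 - Pi.single q 1)) j) ^ 2) ≤
          (1 + ε) * (∑ i, (pS.mulVec (Pi.single p 1 - Pi.single q 1) i) ^ 2))
    (p q : Fin n) :
    Real.sqrt (1 - ε) *
        (Real.sqrt (∑ i, (fS.mulVec (Pi.single p 1 - Pi.single q 1) i) ^ 2) -
          δ * Real.sqrt 2) ≤
      Real.sqrt (∑ j, (Ωᵀ.mulVec (pS.mulVec (Pi.single p 1 - Pi.single q 1)) j) ^ 2) ∧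
    Real.sqrt (∑ j, (Ωᵀ.mulVec (pS.mulVec (Pi.single p 1 - Pi.single q 1)) j) ^ 2) ≤
      Real.sqrt (1 + ε) *
        (Real.sqrt (∑ i, (fS.mulVec (Pi.single p 1 - Pi.single q 1) i) ^ 2) +
          δ * Real.sqrt 2) := by
  obtain ⟨hε0, hε1⟩ := hε
  obtain ⟨hlow, hhigh⟩ := hJL p q
  set x : Fin n → ℝ := Pi.single p 1 - Pi.single q 1 with hxdef
  set c : Fin n → ℝ := fun l => v l ⬝ᵥ x with hc
  have hbasis : ∑ l, c l • v l = x := my_complete v horth x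
  -- δ facts
  have hδl : ∀ l, |f (lam l) - P.eval (lam l)| ≤ δ := by
    intro l
    rw [hδ]
    exact Finset.le_sup' (fun l => |f (lam l) - P.eval (lam l)|) (Finset.mem_univ l)
  have hδ0 : 0 ≤ δ := by
    obtain ⟨l, -⟩ := (Finset.univ_nonempty : (Finset.univ : Finset (Fin n)).Nonempty)
    exact le_trans (abs_nonneg _) (hδl l)
  -- spectral expansions
  have hfx : fS.mulVec x = ∑ l, (f (lam l) * c l) • v l := by
    rw [hfS, my_sum_mulVec]
    refine Finset.sum_congr rfl fun l _ => ?_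
    rw [Matrix.smul_mulVec, my_vecMulVec_mulVec, smul_smul]
  have hpx : pS.mulVec x = ∑ l, (P.eval (lam l) * c l) • v l := by
    conv_lhs => rw [← hbasis]
    have hsum : pS.mulVec (∑ l, c l • v l) = ∑ l, c l • pS.mulVec (v l) := by
      rw [← Matrix.mulVecLin_apply, map_sum]
      simp [Matrix.mulVecLin_apply]
    rw [hsum]
    refine Finset.sum_congr rfl fun l _ => ?_
    rw [hpS, my_aeval_eigen lam v S horth hS, smul_smul, mul_comm]
  have hdiff : fS.mulVec x - pS.mulVec x
      = ∑ l, ((f (lam l) - P.eval (lam l)) * c l) • v l := by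
    rw [hfx, hpx, ← Finset.sum_sub_distrib]
    refine Finset.sum_congr rfl fun l _ => ?_
    rw [← sub_smul, ← sub_mul]
  have hw2 : ∑ i, (fS.mulVec x - pS.mulVec x) i ^ 2
      = ∑ l, ((f (lam l) - P.eval (lam l)) * c l) ^ 2 := by
    rw [hdiff]; exact my_norm2 v horth _
  -- Parseval and ‖x‖² ≤ 2
  have hpar : ∑ l, c l ^ 2 = ∑ i, x i ^ 2 := by
    have h := my_norm2 v horth c
    rw [hbasis] at h
    exact h.symm
  have hx2 : ∑ i, x i ^ 2 ≤ 2 := by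
    have h : ∀ i, x i ^ 2 ≤ (if i = p then (1:ℝ) else 0) + (if i = q then 1 else 0) := by
      intro i
      rcases eq_or_ne i p with hip | hip <;> rcases eq_or_ne i q with hiq | hiq
      · have hpq : p = q := hip ▸ hiq
        simp [hxdef, Pi.single_apply, hip, hiq, hpq]
      · have hpq : ¬p = q := fun h => hiq (hip.trans h)
        simp [hxdef, Pi.single_apply, hip, hiq, hpq]
      · have hpq : ¬q = p := fun h => hip (hiq.trans h)
        simp [hxdef, Pi.single_apply, hip, hiq, hpq]
      · simp [hxdef, Pi.single_apply, hip, hiq]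
    calc ∑ i, x i ^ 2
        ≤ ∑ i : Fin n, ((if i = p then (1:ℝ) else 0) + (if i = q then 1 else 0)) :=
          Finset.sum_le_sum fun i _ => h i
      _ = 2 := by
          rw [Finset.sum_add_distrib]
          simp [Finset.sum_ite_eq']
          norm_num
  have hwbound : ∑ i, (fS.mulVec x - pS.mulVec x) i ^ 2 ≤ δ ^ 2 * 2 := by
    rw [hw2]
    calc ∑ l, ((f (lam l) - P.eval (lam l)) * c l) ^ 2
        ≤ ∑ l, δ ^ 2 * c l ^ 2 := by
          refine Finset.sum_le_sum fun l _ => ?_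
          rw [mul_pow]
          refine mul_le_mul_of_nonneg_right ?_ (sq_nonneg _)
          have := pow_le_pow_left₀ (abs_nonneg _) (hδl l) 2
          rwa [sq_abs] at this
      _ = δ ^ 2 * ∑ l, c l ^ 2 := (Finset.mul_sum _ _ _).symm
      _ ≤ δ ^ 2 * 2 := by
          rw [hpar]
          exact mul_le_mul_of_nonneg_left hx2 (sq_nonneg δ)
  -- triangle inequality
  have habs : |Real.sqrt (∑ i, (fS.mulVec x) i ^ 2) - Real.sqrt (∑ i, (pS.mulVec x) i ^ 2)|
      ≤ δ * Real.sqrt 2 := by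
    have h1 : Real.sqrt (∑ i, (fS.mulVec x - pS.mulVec x) i ^ 2) ≤ δ * Real.sqrt 2 := by
      have h2 : δ * Real.sqrt 2 = Real.sqrt (δ ^ 2 * 2) := by
        rw [Real.sqrt_mul (sq_nonneg δ), Real.sqrt_sq hδ0]
      rw [h2]
      exact Real.sqrt_le_sqrt hwbound
    rw [my_norm_eq, my_norm_eq]
    refine le_trans (abs_norm_sub_norm_le _ _) ?_
    rw [WithLp.equiv_symm_apply, ← WithLp.toLp_sub, ← WithLp.equiv_symm_apply, ← my_norm_eq]
    exact h1
  have hA0 : 0 ≤ ∑ i, (fS.mulVec x) i ^ 2 := Finset.sum_nonneg fun i _ => sq_nonneg _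
  have habs' := abs_le.mp habs
  constructor
  · have hb : Real.sqrt (∑ i, (fS.mulVec x) i ^ 2) - δ * Real.sqrt 2
        ≤ Real.sqrt (∑ i, (pS.mulVec x) i ^ 2) := by linarith [habs'.1, habs'.2]
    calc Real.sqrt (1 - ε) * (Real.sqrt (∑ i, (fS.mulVec x) i ^ 2) - δ * Real.sqrt 2)
        ≤ Real.sqrt (1 - ε) * Real.sqrt (∑ i, (pS.mulVec x) i ^ 2) :=
          mul_le_mul_of_nonneg_left hb (Real.sqrt_nonneg _)
      _ = Real.sqrt ((1 - ε) * ∑ i, (pS.mulVec x) i ^ 2) :=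
          (Real.sqrt_mul (by linarith) _).symm
      _ ≤ Real.sqrt (∑ j, (Ωᵀ.mulVec (pS.mulVec x)) j ^ 2) := Real.sqrt_le_sqrt hlow
  · have hb : Real.sqrt (∑ i, (pS.mulVec x) i ^ 2)
        ≤ Real.sqrt (∑ i, (fS.mulVec x) i ^ 2) + δ * Real.sqrt 2 := by
      linarith [habs'.1, habs'.2]
    calc Real.sqrt (∑ j, (Ωᵀ.mulVec (pS.mulVec x)) j ^ 2)
        ≤ Real.sqrt ((1 + ε) * ∑ i, (pS.mulVec x) i ^ 2) := Real.sqrt_le_sqrt hhigh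
      _ = Real.sqrt (1 + ε) * Real.sqrt (∑ i, (pS.mulVec x) i ^ 2) :=
          Real.sqrt_mul (by linarith) _
      _ ≤ Real.sqrt (1 + ε) *
            (Real.sqrt (∑ i, (fS.mulVec x) i ^ 2) + δ * Real.sqrt 2) :=
          mul_le_mul_of_nonneg_left hb (Real.sqrt_nonneg _)
end

section
/- Let E ∈ ℝ^{n×k} and Ẽ ∈ ℝ^{n×d} be two matrices such that for all rows u,v of E and corresponding rows g(u),g(v) of Ẽ: √(1-ε)(‖u-v‖ - δ√2) ≤ ‖g(u)-g(v)‖ ≤ √(1+ε)(‖u-v‖ + δ√2). Then for any three rows u, v, w of E with ‖u - v‖ + 2√2·δ·√((1+ε)/(1-ε)) + ((√(1+ε)-√(1-ε))/√(1-ε))·‖u-w‖ < ‖u - w‖, we have ‖g(u) - g(v)‖ < ‖g(u) - g(w)‖. -/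
/-- Approximate distance preservation (multiplicative distortion `√(1±ε)` and additive
distortion `δ√2`) preserves strict nearest-neighbor ordering whenever the gap between the
exact distances exceeds the total distortion. -/
theorem approx_embedding_preserves_ordering {n k d : ℕ}
    (ε δ : ℝ) (hε : ε ∈ Set.Ioo (0 : ℝ) 1) (hδ : 0 ≤ δ)
    (E : Fin n → EuclideanSpace ℝ (Fin k)) (Et : Fin n → EuclideanSpace ℝ (Fin d))
    (h : ∀ i j : Fin n,
      Real.sqrt (1 - ε) * (‖E i - E j‖ - δ * Real.sqrt 2) ≤ ‖Et i - Et j‖ ∧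
        ‖Et i - Et j‖ ≤ Real.sqrt (1 + ε) * (‖E i - E j‖ + δ * Real.sqrt 2))
    (iu iv iw : Fin n)
    (hgap : ‖E iu - E iv‖ + 2 * Real.sqrt 2 * δ * Real.sqrt ((1 + ε) / (1 - ε)) +
        ((Real.sqrt (1 + ε) - Real.sqrt (1 - ε)) / Real.sqrt (1 - ε)) * ‖E iu - E iw‖ <
      ‖E iu - E iw‖) :
    ‖Et iu - Et iv‖ < ‖Et iu - Et iw‖ := by
  obtain ⟨hε0, hε1⟩ := hε
  set a := Real.sqrt (1 - ε) with ha
  set b := Real.sqrt (1 + ε) with hb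
  have ha0 : 0 < a := Real.sqrt_pos.mpr (by linarith)
  have hb0 : 0 < b := Real.sqrt_pos.mpr (by linarith)
  have ha2 : a ^ 2 = 1 - ε := Real.sq_sqrt (by linarith)
  have hb2 : b ^ 2 = 1 + ε := Real.sq_sqrt (by linarith)
  have hab : a ≤ b := Real.sqrt_le_sqrt (by linarith)
  have hdiv : Real.sqrt ((1 + ε) / (1 - ε)) = b / a :=
    Real.sqrt_div (by linarith) _
  rw [hdiv] at hgap
  have s2 : (0:ℝ) ≤ Real.sqrt 2 := Real.sqrt_nonneg 2
  have huv := (h iu iv).2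
  have huw := (h iu iw).1
  have hDuv : (0:ℝ) ≤ ‖E iu - E iv‖ := norm_nonneg _
  have hDuw : (0:ℝ) ≤ ‖E iu - E iw‖ := norm_nonneg _
  -- multiply gap by a
  have hgap' : a * ‖E iu - E iv‖ + 2 * Real.sqrt 2 * δ * b +
      (b - a) * ‖E iu - E iw‖ < a * ‖E iu - E iw‖ := by
    have := mul_lt_mul_of_pos_left hgap ha0
    field_simp at this
    nlinarith [this]
  have hmono : ‖E iu - E iv‖ < ‖E iu - E iw‖ := by
    nlinarith [mul_nonneg (sub_nonneg.mpr hab) hDuw,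
      mul_nonneg (mul_nonneg s2 hδ) hb0.le]
  have key : b * (‖E iu - E iv‖ + δ * Real.sqrt 2) <
      a * (‖E iu - E iw‖ - δ * Real.sqrt 2) := by
    nlinarith [mul_nonneg (sub_nonneg.mpr hab) (sub_nonneg.mpr hmono.le),
      mul_nonneg (mul_nonneg hδ s2) (sub_nonneg.mpr hab)]
  linarith
end
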